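/- Let the parameters of H(m,1,n) satisfy the restrictions, let λ be an m-partition of n, and let ρ_λ : H(m,1,n) → End(U_λ) be the representation V_λ. Then for every standard m-tableau X of shape λ and every i = 1, …, n, the Jucys–Murphy element acts by ρ_λ(J_i)(𝒳_X) = c(X|i)·𝒳_X. -/

import Mathlib

open Classical

noncomputable section

namespace CHA

/-- Generator type for the cyclotomic Hecke algebra `H(m,1,n)`:
`Sum.inl ()` is `τ` and `Sum.inr i` (for `i : Fin (n-1)`) is the generator `σ_{i+1}`
(1-based), i.e. the one exchanging the 0-based positions `i` and `i+1`. -/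
abbrev Gen (n : ℕ) := Unit ⊕ Fin (n - 1)

/-- The free-algebra lift of the generator `τ`. -/
def fτ (n : ℕ) : FreeAlgebra ℂ (Gen n) := FreeAlgebra.ι ℂ (Sum.inl ())

/-- The free-algebra lift of the generator `σ_{i+1}` (1-based numbering). -/
def fσ (n : ℕ) (i : Fin (n - 1)) : FreeAlgebra ℂ (Gen n) := FreeAlgebra.ι ℂ (Sum.inr i)

/-- The defining relations of the cyclotomic Hecke algebra `H(m,1,n)`. -/
inductive Rel (m n : ℕ) (q : ℂ) (v : Fin m → ℂ) :
    FreeAlgebra ℂ (Gen n) → FreeAlgebra ℂ (Gen n) → Prop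
  | braid (i j : Fin (n - 1)) (hij : (i : ℕ) + 1 = (j : ℕ)) :
      Rel m n q v (fσ n i * fσ n j * fσ n i) (fσ n j * fσ n i * fσ n j)
  | comm (i j : Fin (n - 1)) (hij : (i : ℕ) + 1 < (j : ℕ)) :
      Rel m n q v (fσ n i * fσ n j) (fσ n j * fσ n i)
  | quad (i : Fin (n - 1)) :
      Rel m n q v (fσ n i * fσ n i) ((q - q⁻¹) • fσ n i + 1)
  | reflection (i : Fin (n - 1)) (hi : (i : ℕ) = 0) :
      Rel m n q v (fτ n * fσ n i * (fτ n * fσ n i)) (fσ n i * fτ n * (fσ n i * fτ n))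
  | taucomm (i : Fin (n - 1)) (hi : 0 < (i : ℕ)) :
      Rel m n q v (fτ n * fσ n i) (fσ n i * fτ n)
  | cyclotomic :
      Rel m n q v ((List.ofFn fun k : Fin m =>
        fτ n - algebraMap ℂ (FreeAlgebra ℂ (Gen n)) (v k)).prod) 0

/-- The cyclotomic Hecke algebra `H(m,1,n)` with parameters `q, v_1, …, v_m`. -/
abbrev Hecke (m n : ℕ) (q : ℂ) (v : Fin m → ℂ) := RingQuot (Rel m n q v)

/-- The generator `τ` of `H(m,1,n)`. -/
def τgen (m n : ℕ) (q : ℂ) (v : Fin m → ℂ) : Hecke m n q v :=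
  RingQuot.mkAlgHom ℂ (Rel m n q v) (fτ n)

/-- The generator `σ_{i+1}` of `H(m,1,n)`, for `i : Fin (n-1)` (so `σgen _ _ _ _ i`
is the paper's `σ_{i+1}` in 1-based numbering). -/
def σgen (m n : ℕ) (q : ℂ) (v : Fin m → ℂ) (i : Fin (n - 1)) : Hecke m n q v :=
  RingQuot.mkAlgHom ℂ (Rel m n q v) (fσ n i)

/-- `σN m n q v k` is `σgen` at `k` if `k < n-1`, and `1` otherwise (junk value). -/
def σN (m n : ℕ) (q : ℂ) (v : Fin m → ℂ) (k : ℕ) : Hecke m n q v :=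
  if h : k < n - 1 then σgen m n q v ⟨k, h⟩ else 1

/-- Jucys–Murphy elements, 0-based: `JMn 0 = τ`, `JMn (k+1) = σ_{k+1} (JMn k) σ_{k+1}`. -/
def JMn (m n : ℕ) (q : ℂ) (v : Fin m → ℂ) : ℕ → Hecke m n q v
  | 0 => τgen m n q v
  | k + 1 => σN m n q v k * JMn m n q v k * σN m n q v k

/-- The Jucys–Murphy element `J_{i+1}` (1-based) of `H(m,1,n)`, for `i : Fin n`. -/
def JM (m n : ℕ) (q : ℂ) (v : Fin m → ℂ) (i : Fin n) : Hecke m n q v :=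
  JMn m n q v i.val

/-- The restrictions on the parameters `q, v_1, …, v_m` of `H(m,1,n)`:
`1 + q² + ⋯ + q^{2N} ≠ 0` for `1 ≤ N < n`; `q^{2i} v_j ≠ v_k` for `j ≠ k`, `−n < i < n`;
`v_j ≠ 0`. -/
def Restrictions (m n : ℕ) (q : ℂ) (v : Fin m → ℂ) : Prop :=
  (∀ N : ℕ, 1 ≤ N → N < n → (∑ j ∈ Finset.range (N + 1), q ^ (2 * j)) ≠ 0) ∧
  (∀ j k : Fin m, j ≠ k → ∀ i : ℤ, -(n : ℤ) < i → i < (n : ℤ) → q ^ (2 * i) * v j ≠ v k) ∧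
  (∀ j, v j ≠ 0)

/-- An `m`-node: a component index `k : Fin m` together with a (0-based) cell
`(row, column)` of a Young diagram. -/
abbrev MNode (m : ℕ) := Fin m × ℕ × ℕ

/-- `pos : Fin n → MNode m` describes a standard `m`-tableau of shape
`μ : Fin m → YoungDiagram` when: every value is a cell of the corresponding diagram;
`pos` is injective; and entries increase (left to right) along rows and down columns,
i.e. if `pos j` is in the same component and row (resp. column) as `pos i` and strictly
to the right (resp. below), then `i < j`.  Here `pos i` is the `m`-node containing the
entry `i+1` (1-based). -/
def IsStdTabFun (m n : ℕ) (μ : Fin m → YoungDiagram) (pos : Fin n → MNode m) : Prop :=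
  (∀ i, ((pos i).2.1, (pos i).2.2) ∈ μ (pos i).1) ∧
  Function.Injective pos ∧
  (∀ i j : Fin n, (pos i).1 = (pos j).1 → (pos i).2.1 = (pos j).2.1 →
      (pos i).2.2 < (pos j).2.2 → i < j) ∧
  (∀ i j : Fin n, (pos i).1 = (pos j).1 → (pos i).2.2 = (pos j).2.2 →
      (pos i).2.1 < (pos j).2.1 → i < j)

/-- The type of standard `m`-tableaux of shape `μ` with entries `1, …, n`. -/
def StdTab (m n : ℕ) (μ : Fin m → YoungDiagram) :=
  { pos : Fin n → MNode m // IsStdTabFun m n μ pos }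

/-- The content `c(X|i) = v_k q^{2(s−r)}` of the entry `i` of a standard `m`-tableau,
where `i` sits in row `r`, column `s` of the `k`-th diagram. -/
def content {m n : ℕ} (q : ℂ) (v : Fin m → ℂ) {μ : Fin m → YoungDiagram}
    (X : StdTab m n μ) (i : Fin n) : ℂ :=
  v (X.val i).1 * q ^ (2 * (((X.val i).2.2 : ℤ) - ((X.val i).2.1 : ℤ)))
/-- The underlying space `U_λ` of the representation `V_λ`: the vector space with basis
`{𝒳_X}` indexed by the standard `m`-tableaux of shape `μ`. -/
abbrev Uspace (m n : ℕ) (μ : Fin m → YoungDiagram) := StdTab m n μ →₀ ℂ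

/-- The operator `T = ρ_λ(τ)`: `𝒳_X ↦ c(X|1)·𝒳_X`. -/
def tauOp (m n : ℕ) (q : ℂ) (v : Fin m → ℂ) (μ : Fin m → YoungDiagram) :
    Module.End ℂ (Uspace m n μ) :=
  Finsupp.lsum ℂ fun X => LinearMap.toSpanSingleton ℂ (Uspace m n μ)
    ((if h : 0 < n then content q v X ⟨0, h⟩ else 0) • Finsupp.single X 1)

/-- The filling obtained from `pos` by exchanging the entries `i+1` and `i+2`
(1-based), i.e. precomposing with the transposition of the 0-based indices
`i.val` and `i.val + 1`. -/
def swapFun {m : ℕ} (n : ℕ) (pos : Fin n → MNode m) (i : Fin (n - 1)) :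
    Fin n → MNode m :=
  pos ∘ (Equiv.swap (⟨i.val, by have := i.isLt; omega⟩ : Fin n)
    ⟨i.val + 1, by have := i.isLt; omega⟩)

/-- `c(X|i+1)` (1-based), for `i : Fin (n-1)`. -/
def cLow {m n : ℕ} (q : ℂ) (v : Fin m → ℂ) {μ : Fin m → YoungDiagram}
    (X : StdTab m n μ) (i : Fin (n - 1)) : ℂ :=
  content q v X ⟨i.val, by have := i.isLt; omega⟩

/-- `c(X|i+2)` (1-based), for `i : Fin (n-1)`. -/
def cHigh {m n : ℕ} (q : ℂ) (v : Fin m → ℂ) {μ : Fin m → YoungDiagram}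
    (X : StdTab m n μ) (i : Fin (n - 1)) : ℂ :=
  content q v X ⟨i.val + 1, by have := i.isLt; omega⟩

/-- The image of the basis vector `𝒳_X` under `ρ_λ(σ_{i+1})`:
`((q−q⁻¹)c(X|i+1)/(c(X|i+1)−c(X|i)))·𝒳_X
  + ((q·c(X|i+1)−q⁻¹·c(X|i))/(c(X|i+1)−c(X|i)))·𝒳_{X^{s_i}}`,
where `𝒳_{X^{s_i}} := 0` if `X^{s_i}` is not standard. -/
def sigmaVec (m n : ℕ) (q : ℂ) (v : Fin m → ℂ) (μ : Fin m → YoungDiagram)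
    (X : StdTab m n μ) (i : Fin (n - 1)) : Uspace m n μ :=
  ((q - q⁻¹) * cHigh q v X i / (cHigh q v X i - cLow q v X i)) • Finsupp.single X 1 +
  ((q * cHigh q v X i - q⁻¹ * cLow q v X i) / (cHigh q v X i - cLow q v X i)) •
    (if h : IsStdTabFun m n μ (swapFun n X.val i) then
        Finsupp.single (⟨swapFun n X.val i, h⟩ : StdTab m n μ) 1
      else 0)

/-- The operator `S_i = ρ_λ(σ_{i+1})` (1-based `σ`, 0-based `i : Fin (n-1)`). -/
def sigmaOp (m n : ℕ) (q : ℂ) (v : Fin m → ℂ) (μ : Fin m → YoungDiagram)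
    (i : Fin (n - 1)) : Module.End ℂ (Uspace m n μ) :=
  Finsupp.lsum ℂ fun X => LinearMap.toSpanSingleton ℂ (Uspace m n μ)
    (sigmaVec m n q v μ X i)

/-!
Induction along `J_{k+1} = σ_k J_k σ_k`. Write `σ_k 𝒳_X = a 𝒳_X + w` with
`a = (q - q⁻¹) c' / (c' - c)`, `c = c(X|k)`, `c' = c(X|k+1)`, and `w` a multiple of
`𝒳_{X^{s_k}}` (or zero). By induction `J_k` acts by `c` on `𝒳_X` and by `c'` on `w`, so
`J_k σ_k 𝒳_X = c' (σ_k - (q - q⁻¹)) 𝒳_X`, which the quadratic relation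
`σ_k² = (q - q⁻¹) σ_k + 1` turns into `σ_k J_k σ_k 𝒳_X = c' 𝒳_X`. The quadratic relation also
rules out `c = c'`: every coefficient of `σ_k 𝒳_X` would then be a quotient by `0`, hence `0`,
and `σ_k 𝒳_X = 0` contradicts `σ_k² 𝒳_X = (q - q⁻¹) σ_k 𝒳_X + 𝒳_X`.
-/

section Quadratic

variable {R M : Type*} [CommRing R] [AddCommGroup M] [Module R M]
  {S : Module.End R M} {p : R}

theorem eq_zero_of_quadratic_of_apply_eq_zero (hS : S * S = p • S + 1) {e : M}
    (he : S e = 0) : e = 0 := by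
  simpa [he] using (LinearMap.congr_fun hS e).symm

theorem apply_apply_apply_eq_smul_of_quadratic (hS : S * S = p • S + 1) {J : Module.End R M}
    {a c c' : R} {e w : M} (hSe : S e = a • e + w) (hJe : J e = c • e)
    (hJw : J w = c' • w) (ha : a * (c' - c) = p * c') :
    S (J (S e)) = c' • e := by
  have hJSe : J (S e) = c' • (S e - p • e) := by
    rw [hSe, map_add, map_smul, hJe, hJw]
    linear_combination (norm := module) (-ha) • e
  calc S (J (S e)) = c' • ((S * S) e - p • S e) := by
        rw [hJSe, map_smul, map_sub, map_smul, Module.End.mul_apply]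
    _ = c' • e := by rw [hS]; simp

end Quadratic

variable {m n : ℕ} {q : ℂ} {v : Fin m → ℂ} {μ : Fin m → YoungDiagram}

theorem σgen_mul_self (i : Fin (n - 1)) :
    σgen m n q v i * σgen m n q v i = (q - q⁻¹) • σgen m n q v i + 1 := by
  simpa [σgen] using RingQuot.mkAlgHom_rel ℂ (Rel.quad (m := m) (q := q) (v := v) i)

theorem JMn_succ {k : ℕ} (hk : k < n - 1) :
    JMn m n q v (k + 1) = σgen m n q v ⟨k, hk⟩ * JMn m n q v k * σgen m n q v ⟨k, hk⟩ := by
  simp [JMn, σN, hk]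

theorem tauOp_single (X : StdTab m n μ) :
    tauOp m n q v μ (Finsupp.single X 1) =
      (if h : 0 < n then content q v X ⟨0, h⟩ else 0) • Finsupp.single X 1 := by
  simp [tauOp]

theorem sigmaOp_single (X : StdTab m n μ) (i : Fin (n - 1)) :
    sigmaOp m n q v μ i (Finsupp.single X 1) = sigmaVec m n q v μ X i := by
  simp [sigmaOp]

/-- `X^{s_i}`, when it is standard. -/
def swapTab (X : StdTab m n μ) (i : Fin (n - 1)) (h : IsStdTabFun m n μ (swapFun n X.val i)) :
    StdTab m n μ :=
  ⟨swapFun n X.val i, h⟩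

theorem content_swapTab (X : StdTab m n μ) (i : Fin (n - 1))
    (h : IsStdTabFun m n μ (swapFun n X.val i)) :
    content q v (swapTab X i h) ⟨i, by omega⟩ = cHigh q v X i := by
  simp [content, cHigh, swapTab, swapFun]

/-- `𝒳_{X^{s_i}}`, with the convention `𝒳_{X^{s_i}} = 0` when `X^{s_i}` is not standard. -/
def swapVec (X : StdTab m n μ) (i : Fin (n - 1)) : Uspace m n μ :=
  if h : IsStdTabFun m n μ (swapFun n X.val i) then Finsupp.single (swapTab X i h) 1 else 0

theorem sigmaVec_eq (X : StdTab m n μ) (i : Fin (n - 1)) :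
    sigmaVec m n q v μ X i =
      ((q - q⁻¹) * cHigh q v X i / (cHigh q v X i - cLow q v X i)) • Finsupp.single X 1 +
      ((q * cHigh q v X i - q⁻¹ * cLow q v X i) / (cHigh q v X i - cLow q v X i)) •
        swapVec X i :=
  rfl

theorem cHigh_sub_cLow_ne_zero {i : Fin (n - 1)}
    (hS : sigmaOp m n q v μ i * sigmaOp m n q v μ i = (q - q⁻¹) • sigmaOp m n q v μ i + 1)
    (X : StdTab m n μ) : cHigh q v X i - cLow q v X i ≠ 0 := by
  intro h
  have hX : sigmaOp m n q v μ i (Finsupp.single X 1) = 0 := by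
    rw [sigmaOp_single, sigmaVec_eq, h]
    simp
  exact Finsupp.single_ne_zero.mpr one_ne_zero (eq_zero_of_quadratic_of_apply_eq_zero hS hX)

theorem map_JMn_single (ρ : Hecke m n q v →ₐ[ℂ] Module.End ℂ (Uspace m n μ))
    (hρτ : ρ (τgen m n q v) = tauOp m n q v μ)
    (hρσ : ∀ i : Fin (n - 1), ρ (σgen m n q v i) = sigmaOp m n q v μ i)
    (k : ℕ) (hk : k < n) (X : StdTab m n μ) :
    ρ (JMn m n q v k) (Finsupp.single X 1) = content q v X ⟨k, hk⟩ • Finsupp.single X 1 := by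
  induction k generalizing X with
  | zero => rw [JMn, hρτ, tauOp_single, dif_pos hk]
  | succ k ih =>
    have hk' : k < n - 1 := by omega
    set i : Fin (n - 1) := ⟨k, hk'⟩
    have hS : sigmaOp m n q v μ i * sigmaOp m n q v μ i
        = (q - q⁻¹) • sigmaOp m n q v μ i + 1 := by
      rw [← hρσ, ← map_mul, σgen_mul_self, map_add, map_smul, map_one]
    have hJw : ρ (JMn m n q v k) (swapVec X i) = cHigh q v X i • swapVec X i := by
      unfold swapVec
      split_ifs with h
      · rw [ih (by omega), content_swapTab]
      · simp
    rw [JMn_succ hk', map_mul, map_mul, hρσ]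
    exact apply_apply_apply_eq_smul_of_quadratic hS ((sigmaOp_single X i).trans (sigmaVec_eq X i))
      (ih (by omega) X) (by rw [map_smul, hJw, smul_comm]; rfl)
      (div_mul_cancel₀ _ (cHigh_sub_cLow_ne_zero hS X))

theorem JM_acts_by_contents_on_Vlambda_general
    (m n : ℕ) (q : ℂ) (v : Fin m → ℂ)
    (μ : Fin m → YoungDiagram)
    (ρ : Hecke m n q v →ₐ[ℂ] Module.End ℂ (Uspace m n μ))
    (hρτ : ρ (τgen m n q v) = tauOp m n q v μ)
    (hρσ : ∀ i : Fin (n - 1), ρ (σgen m n q v i) = sigmaOp m n q v μ i) :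
    ∀ (X : StdTab m n μ) (i : Fin n),
      ρ (JM m n q v i) (Finsupp.single X 1) = content q v X i • Finsupp.single X 1 :=
  fun X i => map_JMn_single ρ hρτ hρσ i.val i.isLt X

/-- Lemma 4.4.  Under the restrictions on the parameters, in the
representation `V_μ` (i.e. for any algebra homomorphism `ρ : H(m,1,n) → End(U_μ)` with
`ρ(τ) = tauOp` and `ρ(σ_i) = sigmaOp i`), the Jucys–Murphy elements act diagonally:
`ρ(J_i)(𝒳_X) = c(X|i) · 𝒳_X` for every standard `m`-tableau `X` of shape `μ`. -/
theorem JM_acts_by_contents_on_Vlambda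
    (m n : ℕ) (hm : 1 ≤ m) (hn : 1 ≤ n) (q : ℂ) (hq : q ≠ 0) (v : Fin m → ℂ)
    (hres : Restrictions m n q v)
    (μ : Fin m → YoungDiagram) (hμ : ∑ k, (μ k).card = n)
    (ρ : Hecke m n q v →ₐ[ℂ] Module.End ℂ (Uspace m n μ))
    (hρτ : ρ (τgen m n q v) = tauOp m n q v μ)
    (hρσ : ∀ i : Fin (n - 1), ρ (σgen m n q v i) = sigmaOp m n q v μ i) :
    ∀ (X : StdTab m n μ) (i : Fin n),
      ρ (JM m n q v i) (Finsupp.single X 1) = content q v X i • Finsupp.single X 1 :=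
  JM_acts_by_contents_on_Vlambda_general m n q v μ ρ hρτ hρσ

end CHA
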